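/- U^k(R_min^max, C_min^max) is the convex hull of P^k(R_min^max, C_min^max), the set of its 0-1 matrices with total sum k. -/

import Mathlib

/-!
`U^k` is compact and convex, so by Krein–Milman it is the closed convex hull of its extreme
points; as there are only finitely many 0-1 matrices, it suffices that every extreme point `A` is
integral. View the fractional entries of `A` as the edges of a bipartite graph on rows and columns,
where a row or column is a constrained vertex when its sum is an integer, and all rows with
fractional sum are merged into a single constrained vertex, which accounts for the total sum.
Induction on the number of edges shows that either all these entries are integers (absurd), or
some nonzero `D` supported on them leaves every constrained vertex sum unchanged: an edge with no
constrained end carries `D` alone; an edge at a vertex of degree one, or with only one constrained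
end, is removed; otherwise every vertex has degree at least two and a dimension count produces
`D`. Then `A ± t D` lies in `U^k` for small `t`, contradicting extremality.
-/

/-- The transportation polytope `U(R_min^max, C_min^max)`: n×m real matrices with entries
in `[0,1]`, row sums in `[r i, R i]` and column sums in `[c j, C j]`. -/
def transportU (n m : ℕ) (r R : Fin n → ℕ) (c C : Fin m → ℕ) :
    Set (Matrix (Fin n) (Fin m) ℝ) :=
  {A | (∀ i j, 0 ≤ A i j ∧ A i j ≤ 1) ∧
       (∀ i, (r i : ℝ) ≤ ∑ j, A i j ∧ ∑ j, A i j ≤ (R i : ℝ)) ∧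
       (∀ j, (c j : ℝ) ≤ ∑ i, A i j ∧ ∑ i, A i j ≤ (C j : ℝ))}

open Finset Filter Topology
open AddSubgroup (zmultiples)

section FinsetSums

variable {ε M : Type*}

theorem sum_filter_erase_add [AddCommMonoid M] [DecidableEq ε] {F : Finset ε} {e₀ : ε}
    (he₀ : e₀ ∈ F) (p : ε → Prop) [DecidablePred p] (x : ε → M) :
    ∑ e ∈ F.erase e₀ with p e, x e + (if p e₀ then x e₀ else 0) = ∑ e ∈ F with p e, x e := by
  simp only [sum_filter]
  exact sum_erase_add F _ he₀

theorem sum_filter_update_eq [AddCommMonoid M] [DecidableEq ε] {F : Finset ε} {e₀ : ε}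
    (he₀ : e₀ ∈ F) (p : ε → Prop) [DecidablePred p] (x : ε → M) (c : M) :
    ∑ e ∈ F with p e, Function.update x e₀ c e =
      ∑ e ∈ F.erase e₀ with p e, x e + if p e₀ then c else 0 := by
  rw [← sum_filter_erase_add he₀, Function.update_self]
  congr 1
  exact sum_congr rfl fun e he => Function.update_of_ne (ne_of_mem_erase (mem_filter.1 he).1) _ _

theorem sum_filter_dite_mem [AddCommMonoid M] [DecidableEq ε] (F : Finset ε) (p : ε → Prop)
    [DecidablePred p] (x : F → M) :
    ∑ e ∈ F with p e, (if h : e ∈ F then x ⟨e, h⟩ else 0) = ∑ i with p i.1, x i := by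
  rw [sum_filter, sum_filter, ← sum_coe_sort F]
  simp

theorem sum_filter_eq_of_forall_notMem_eq_zero [Fintype ε] [AddCommMonoid M] {F : Finset ε}
    {D : ε → M} (hD : ∀ e ∉ F, D e = 0) (p : ε → Prop) [DecidablePred p] :
    ∑ e ∈ F with p e, D e = ∑ e with p e, D e :=
  sum_subset (filter_subset_filter p (subset_univ F)) fun e he hne =>
    hD e fun hF => hne (mem_filter.2 ⟨hF, (mem_filter.1 he).2⟩)

theorem AddSubgroup.sum_filter_notMem_mem [AddCommGroup M] {G : AddSubgroup M}
    [DecidablePred (· ∈ G)] {s : Finset ε} {f : ε → M} (h : ∑ e ∈ s, f e ∈ G) :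
    ∑ e ∈ s with f e ∉ G, f e ∈ G := by
  rw [← sum_filter_add_sum_filter_not s (f · ∈ G)] at h
  exact (G.add_mem_cancel_left (sum_mem fun e he => (mem_filter.1 he).2)).1 h

theorem two_mul_card_image_le_card {V : Type*} [Fintype ε] [DecidableEq V] (f : ε → V)
    (hf : ∀ e, ∃ e' ≠ e, f e' = f e) : 2 * #(univ.image f) ≤ Fintype.card ε := by
  calc 2 * #(univ.image f) = ∑ _v ∈ univ.image f, 2 := by rw [sum_const, smul_eq_mul, mul_comm]
    _ ≤ ∑ v ∈ univ.image f, #{e | f e = v} := by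
      refine sum_le_sum fun v hv => ?_
      obtain ⟨e, -, rfl⟩ := mem_image.1 hv
      obtain ⟨e', he', hf'⟩ := hf e
      exact one_lt_card.2 ⟨e, by simp, e', by simp [hf'], he'.symm⟩
    _ = Fintype.card ε := (card_eq_sum_card_image f univ).symm

end FinsetSums

section Products

variable {α β M : Type*} [Fintype α] [Fintype β] [AddCommMonoid M]

theorem sum_filter_fst (p : α → Prop) [DecidablePred p] (f : α × β → M) :
    ∑ e with p e.1, f e = ∑ i with p i, ∑ j, f (i, j) := by
  rw [← univ_product_univ, filter_product_left, sum_product]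

theorem sum_filter_fst_eq [DecidableEq α] (i : α) (f : α × β → M) :
    ∑ e with e.1 = i, f e = ∑ j, f (i, j) := by
  rw [sum_filter_fst (· = i), filter_eq', if_pos (mem_univ i), sum_singleton]

theorem sum_filter_snd_eq [DecidableEq β] (j : β) (f : α × β → M) :
    ∑ e with e.2 = j, f e = ∑ i, f (i, j) := by
  rw [← univ_product_univ, filter_product_right (· = j), sum_product]
  simp only [filter_eq', if_pos (mem_univ j), sum_singleton]

end Products

section GuardMem

variable {ι M : Type*} [AddCommGroup M] {G : AddSubgroup M} [DecidablePred (· ∈ G)]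

def guardMem (G : AddSubgroup M) [DecidablePred (· ∈ G)] (s : ι → M) (i : ι) : Option ι :=
  if s i ∈ G then some i else none

theorem guardMem_eq_some_iff {s : ι → M} {i i' : ι} :
    guardMem G s i = some i' ↔ i = i' ∧ s i ∈ G := by
  unfold guardMem
  split_ifs <;> simp [*]

theorem sum_filter_guardMem_eq_mem [Fintype ι] [DecidableEq ι] {s : ι → M} (hs : ∑ i, s i ∈ G)
    (v : Option ι) : ∑ i with guardMem G s i = v, s i ∈ G := by
  cases v with
  | none =>
    simp only [guardMem, ite_eq_right_iff, reduceCtorEq, imp_false]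
    exact AddSubgroup.sum_filter_notMem_mem hs
  | some i₀ => exact sum_mem fun i hi => (guardMem_eq_some_iff.1 (mem_filter.1 hi).2).2

end GuardMem

/-- Every vertex of the bipartite graph whose edge `i` joins `f i` and `g i` has degree at least
two, so there are fewer vertices than edges; and as the left and the right fibre sums have the same
total, one left vertex can be left out of the count. -/
theorem exists_ne_zero_fiber_sums_eq_zero {ι K VL VR : Type*} [Fintype ι] [Nonempty ι] [Field K]
    [DecidableEq VL] [DecidableEq VR] (f : ι → VL) (g : ι → VR) (hf : ∀ i, ∃ j ≠ i, f j = f i)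
    (hg : ∀ i, ∃ j ≠ i, g j = g i) :
    ∃ x : ι → K, x ≠ 0 ∧ (∀ v, ∑ i with f i = v, x i = 0) ∧ ∀ u, ∑ i with g i = u, x i = 0 := by
  obtain ⟨i₀⟩ := ‹Nonempty ι›
  have hv₀ : f i₀ ∈ univ.image f := mem_image_of_mem f (mem_univ i₀)
  let Φ : (ι → K) →ₗ[K] (↥((univ.image f).erase (f i₀)) → K) × (↥(univ.image g) → K) :=
    (LinearMap.pi fun v => ∑ i with f i = v.1, LinearMap.proj i).prod
      (LinearMap.pi fun u => ∑ i with g i = u.1, LinearMap.proj i)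
  have hdim : Module.finrank K ((↥((univ.image f).erase (f i₀)) → K) × (↥(univ.image g) → K)) <
      Module.finrank K (ι → K) := by
    have := two_mul_card_image_le_card f hf
    have := two_mul_card_image_le_card g hg
    have := card_pos.2 ⟨_, hv₀⟩
    simp only [Module.finrank_prod, Module.finrank_fintype_fun_eq_card, Fintype.card_coe,
      card_erase_of_mem hv₀]
    omega
  obtain ⟨x, hx, hx0⟩ :=
    (Submodule.ne_bot_iff _).1 (LinearMap.ker_ne_bot_of_finrank_lt (f := Φ) hdim)
  have hΦx := LinearMap.mem_ker.1 hx
  have hL : ∀ v ≠ f i₀, ∑ i with f i = v, x i = 0 := fun v hv => by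
    by_cases hvf : v ∈ univ.image f
    · simpa [Φ, LinearMap.sum_apply] using
        congrFun (congrArg Prod.fst hΦx) ⟨v, mem_erase.2 ⟨hv, hvf⟩⟩
    · exact sum_eq_zero fun i hi => (hvf (by simp [← (mem_filter.1 hi).2])).elim
  have hR : ∀ u, ∑ i with g i = u, x i = 0 := fun u => by
    by_cases hug : u ∈ univ.image g
    · simpa [Φ, LinearMap.sum_apply] using congrFun (congrArg Prod.snd hΦx) ⟨u, hug⟩
    · exact sum_eq_zero fun i hi => (hug (by simp [← (mem_filter.1 hi).2])).elim
  refine ⟨x, hx0, fun v => ?_, hR⟩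
  by_cases hv : v = f i₀
  · subst hv
    have htot :=
      (sum_fiberwise_of_maps_to (s := univ) (fun i _ => mem_image_of_mem f (mem_univ i)) x).trans
        (sum_fiberwise_of_maps_to (s := univ) (fun i _ => mem_image_of_mem g (mem_univ i)) x).symm
    rwa [sum_eq_zero fun u _ => hR u, ← add_sum_erase _ _ hv₀,
      sum_eq_zero fun v hv => hL v (ne_of_mem_erase hv), add_zero] at htot
  · exact hL v hv

section Balanced

variable {ε K M VL VR : Type*} [DecidableEq VL] [DecidableEq VR]
  {vL : ε → VL} {vR : ε → VR} {F : Finset ε} {AL : Set VL} {AR : Set VR}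

/-- The edges `e ∈ F` join `vL e` to `vR e`; only the vertices in `AL` and `AR` are constrained. -/
def IsBalanced [AddCommMonoid K] (vL : ε → VL) (vR : ε → VR) (F : Finset ε) (AL : Set VL)
    (AR : Set VR) (D : ε → K) : Prop :=
  (∀ e ∉ F, D e = 0) ∧ (∀ v ∈ AL, ∑ e ∈ F with vL e = v, D e = 0) ∧
    ∀ u ∈ AR, ∑ e ∈ F with vR e = u, D e = 0

theorem isBalanced_comm [AddCommMonoid K] {D : ε → K} :
    IsBalanced vL vR F AL AR D ↔ IsBalanced vR vL F AR AL D := by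
  unfold IsBalanced
  tauto

theorem isBalanced_single [AddCommMonoid K] [DecidableEq ε] {e₀ : ε} (he₀ : e₀ ∈ F)
    (hL₀ : vL e₀ ∉ AL) (hR₀ : vR e₀ ∉ AR) (c : K) :
    IsBalanced vL vR F AL AR (Pi.single e₀ c) := by
  refine ⟨fun e he => Pi.single_eq_of_ne (ne_of_mem_of_not_mem he₀ he).symm _,
    fun v hv => ?_, fun u hu => ?_⟩
  · rw [sum_pi_single', if_neg]
    exact fun h => hL₀ ((mem_filter.1 h).2 ▸ hv)
  · rw [sum_pi_single', if_neg]
    exact fun h => hR₀ ((mem_filter.1 h).2 ▸ hu)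

theorem exists_isBalanced_ne_zero_of_forall_exists_ne [Field K] (hF : F.Nonempty)
    (hL : ∀ e ∈ F, ∃ e' ∈ F, vL e' = vL e ∧ e' ≠ e)
    (hR : ∀ e ∈ F, ∃ e' ∈ F, vR e' = vR e ∧ e' ≠ e) :
    ∃ D : ε → K, D ≠ 0 ∧ IsBalanced vL vR F AL AR D := by
  classical
  have : Nonempty F := hF.to_subtype
  obtain ⟨x, hx0, hxL, hxR⟩ := exists_ne_zero_fiber_sums_eq_zero (K := K) (fun i : F => vL i)
    (fun i : F => vR i)
    (fun i => by
      obtain ⟨e, he, hvL, hne⟩ := hL i i.2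
      exact ⟨⟨e, he⟩, fun h => hne (congrArg Subtype.val h), hvL⟩)
    (fun i => by
      obtain ⟨e, he, hvR, hne⟩ := hR i i.2
      exact ⟨⟨e, he⟩, fun h => hne (congrArg Subtype.val h), hvR⟩)
  refine ⟨fun e => if h : e ∈ F then x ⟨e, h⟩ else 0, fun h => hx0 (funext fun i => ?_),
    fun e he => dif_neg he, fun v _ => ?_, fun u _ => ?_⟩
  · simpa using congrFun h i
  · rw [sum_filter_dite_mem]
    exact hxL v
  · rw [sum_filter_dite_mem]
    exact hxR u

section Erase

variable [AddCommGroup K] [AddCommGroup M] [DecidableEq ε] {e₀ : ε}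

/-- The new weight at `e₀` rebalances `vL e₀`; it vanishes when `vR e₀` is constrained, since
`e₀` is then the only edge at `vL e₀`. -/
theorem IsBalanced.update_of_erase (he₀ : e₀ ∈ F)
    (hsolo : vR e₀ ∈ AR → ∀ e ∈ F, vL e = vL e₀ → e = e₀) {D : ε → K}
    (hD : IsBalanced vL vR (F.erase e₀) (AL \ {vL e₀}) AR D) :
    IsBalanced vL vR F AL AR
      (Function.update D e₀ (-∑ e ∈ F.erase e₀ with vL e = vL e₀, D e)) := by
  obtain ⟨hsupp, hL, hR⟩ := hD
  refine ⟨fun e he => ?_, fun v hv => ?_, fun u hu => ?_⟩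
  · rw [Function.update_of_ne (ne_of_mem_of_not_mem he₀ he).symm]
    exact hsupp e fun h => he (mem_of_mem_erase h)
  · rw [sum_filter_update_eq he₀]
    by_cases hv₀ : vL e₀ = v
    · subst hv₀
      simp
    · simp [hv₀, hL v ⟨hv, Ne.symm hv₀⟩]
  · rw [sum_filter_update_eq he₀, hR u hu]
    split_ifs with hu₀
    · subst hu₀
      rw [sum_eq_zero fun e he => absurd (hsolo hu e (mem_of_mem_erase (mem_filter.1 he).1)
        (mem_filter.1 he).2) (ne_of_mem_erase (mem_filter.1 he).1)]
      simp
    · simp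

theorem exists_isBalanced_or_forall_mem_of_erase (G : AddSubgroup M) {a : ε → M}
    (hL : ∀ v ∈ AL, ∑ e ∈ F with vL e = v, a e ∈ G)
    (hR : ∀ u ∈ AR, ∑ e ∈ F with vR e = u, a e ∈ G)
    (he₀ : e₀ ∈ F) (hv₀ : vL e₀ ∈ AL) (hsolo : vR e₀ ∈ AR → ∀ e ∈ F, vL e = vL e₀ → e = e₀)
    (ih : (∀ v ∈ AL \ {vL e₀}, ∑ e ∈ F.erase e₀ with vL e = v, a e ∈ G) →
      (∀ u ∈ AR, ∑ e ∈ F.erase e₀ with vR e = u, a e ∈ G) →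
      (∃ D : ε → K, D ≠ 0 ∧ IsBalanced vL vR (F.erase e₀) (AL \ {vL e₀}) AR D) ∨
        ∀ e ∈ F.erase e₀, a e ∈ G) :
    (∃ D : ε → K, D ≠ 0 ∧ IsBalanced vL vR F AL AR D) ∨ ∀ e ∈ F, a e ∈ G := by
  have hsplit (p : ε → Prop) [DecidablePred p] := sum_filter_erase_add he₀ p a
  have ha₀ : vR e₀ ∈ AR → a e₀ ∈ G := fun hu => by
    have : ∑ e ∈ F with vL e = vL e₀, a e = a e₀ := sum_eq_single_of_mem e₀
      (mem_filter.2 ⟨he₀, rfl⟩) fun e he hne =>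
        absurd (hsolo hu e (mem_filter.1 he).1 (mem_filter.1 he).2) hne
    exact this ▸ hL _ hv₀
  have hL' : ∀ v ∈ AL \ {vL e₀}, ∑ e ∈ F.erase e₀ with vL e = v, a e ∈ G := fun v hv => by
    have := hL v hv.1
    rwa [← hsplit, if_neg fun h => hv.2 h.symm, add_zero] at this
  have hR' : ∀ u ∈ AR, ∑ e ∈ F.erase e₀ with vR e = u, a e ∈ G := fun u hu => by
    have := hR u hu
    rw [← hsplit] at this
    refine (G.add_mem_cancel_right ?_).1 this
    split_ifs with h
    exacts [ha₀ (h ▸ hu), G.zero_mem]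
  rcases ih hL' hR' with ⟨D, hD0, hD⟩ | hint
  · refine Or.inl ⟨_, fun h => hD0 (funext fun e => ?_), hD.update_of_erase he₀ hsolo⟩
    by_cases he : e = e₀
    · exact he ▸ hD.1 e₀ (notMem_erase e₀ F)
    · simpa [he] using congrFun h e
  · have ha₀ : a e₀ ∈ G := by
      have := hL _ hv₀
      rw [← hsplit, if_pos rfl] at this
      exact (G.add_mem_cancel_left (sum_mem fun e he => hint e (mem_filter.1 he).1)).1 this
    refine Or.inr fun e he => ?_
    by_cases he' : e = e₀
    · exact he' ▸ ha₀
    · exact hint e (mem_erase.2 ⟨he', he⟩)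

end Erase

theorem exists_isBalanced_ne_zero_or_forall_mem [Field K] [AddCommGroup M] (G : AddSubgroup M)
    (vL : ε → VL) (vR : ε → VR) (a : ε → M) (F : Finset ε) (AL : Set VL) (AR : Set VR)
    (hL : ∀ v ∈ AL, ∑ e ∈ F with vL e = v, a e ∈ G)
    (hR : ∀ u ∈ AR, ∑ e ∈ F with vR e = u, a e ∈ G) :
    (∃ D : ε → K, D ≠ 0 ∧ IsBalanced vL vR F AL AR D) ∨ ∀ e ∈ F, a e ∈ G := by
  classical
  induction F using Finset.strongInduction generalizing AL AR with
  | H F ih =>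
  rcases F.eq_empty_or_nonempty with rfl | hF
  · exact Or.inr fun e he => absurd he (notMem_empty e)
  by_cases hfree : ∃ e₀ ∈ F, vL e₀ ∉ AL ∧ vR e₀ ∉ AR
  · obtain ⟨e₀, he₀, hL₀, hR₀⟩ := hfree
    exact Or.inl ⟨Pi.single e₀ (1 : K), fun h => by simpa using congrFun h e₀,
      isBalanced_single he₀ hL₀ hR₀ 1⟩
  by_cases hpeelL : ∃ e₀ ∈ F, vL e₀ ∈ AL ∧ (vR e₀ ∈ AR → ∀ e ∈ F, vL e = vL e₀ → e = e₀)
  · obtain ⟨e₀, he₀, hv₀, hsolo⟩ := hpeelL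
    exact exists_isBalanced_or_forall_mem_of_erase G hL hR he₀ hv₀ hsolo
      (ih _ (erase_ssubset he₀) _ _)
  by_cases hpeelR : ∃ e₀ ∈ F, vR e₀ ∈ AR ∧ (vL e₀ ∈ AL → ∀ e ∈ F, vR e = vR e₀ → e = e₀)
  · obtain ⟨e₀, he₀, hv₀, hsolo⟩ := hpeelR
    simp only [isBalanced_comm (vL := vL)] at ih ⊢
    exact exists_isBalanced_or_forall_mem_of_erase G hR hL he₀ hv₀ hsolo
      fun hR' hL' => ih _ (erase_ssubset he₀) _ _ hL' hR'
  push Not at hfree hpeelL hpeelR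
  -- every edge now has both ends constrained, and no constrained vertex has degree one
  have hboth : ∀ e ∈ F, vL e ∈ AL ∧ vR e ∈ AR := fun e he => by
    by_cases h : vL e ∈ AL
    · exact ⟨h, (hpeelL e he h).1⟩
    · exact absurd (hpeelR e he (hfree e he h)).1 h
  exact Or.inl (exists_isBalanced_ne_zero_of_forall_exists_ne hF
    (fun e he => (hpeelL e he (hboth e he).1).2) fun e he => (hpeelR e he (hboth e he).2).2)

end Balanced

theorem eq_convexHull_of_extremePoints_subset {E : Type*} [AddCommGroup E] [Module ℝ E]
    [TopologicalSpace E] [T2Space E] [IsTopologicalAddGroup E] [ContinuousSMul ℝ E]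
    [LocallyConvexSpace ℝ E] {S P : Set E} (hS : IsCompact S) (hSc : Convex ℝ S)
    (hext : S.extremePoints ℝ ⊆ P) (hPS : P ⊆ S) (hP : P.Finite) : S = convexHull ℝ P := by
  refine (convexHull_min hPS hSc).antisymm' ?_
  calc S = closure (convexHull ℝ (S.extremePoints ℝ)) :=
        (closure_convexHull_extremePoints hS hSc).symm
    _ ⊆ closure (convexHull ℝ P) := closure_mono (convexHull_mono hext)
    _ = convexHull ℝ P := (hP.isClosed_convexHull ℝ).closure_eq

theorem eq_zero_of_mem_extremePoints_of_eventually_add_smul_mem {E : Type*} [AddCommGroup E]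
    [Module ℝ E] {S : Set E} {x v : E} (hx : x ∈ S.extremePoints ℝ)
    (h : ∀ᶠ t in 𝓝 (0 : ℝ), x + t • v ∈ S) : v = 0 := by
  have hneg : ∀ᶠ t in 𝓝 (0 : ℝ), x + (-t) • v ∈ S :=
    (continuous_neg.tendsto' (0 : ℝ) 0 neg_zero).eventually h
  obtain ⟨t, ⟨h₁, h₂⟩, ht⟩ :=
    ((h.and hneg).filter_mono nhdsWithin_le_nhds |>.and self_mem_nhdsWithin).exists
      (f := 𝓝[≠] (0 : ℝ))
  have hseg : x ∈ openSegment ℝ (x + t • v) (x + (-t) • v) :=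
    ⟨1 / 2, 1 / 2, by norm_num, by norm_num, by norm_num, by module⟩
  have := hx.2 h₁ h₂ hseg
  rw [add_eq_left, smul_eq_zero] at this
  exact this.resolve_left ht

theorem eventually_add_mul_mem_Icc {G : AddSubgroup ℝ} {a b x y : ℝ} (ha : a ∈ G) (hb : b ∈ G)
    (hx : x ∈ Set.Icc a b) (hy : x ∈ G → y = 0) : ∀ᶠ t in 𝓝 0, x + t * y ∈ Set.Icc a b := by
  by_cases hxG : x ∈ G
  · simpa [hy hxG] using hx
  have hxab : x ∈ Set.Ioo a b :=
    ⟨hx.1.lt_of_ne fun h => hxG (h ▸ ha), hx.2.lt_of_ne fun h => hxG (h ▸ hb)⟩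
  have hlim : Tendsto (fun t => x + t * y) (𝓝 0) (𝓝 x) :=
    ((continuous_id.mul continuous_const).const_add x).tendsto' 0 x (by simp)
  exact (hlim.eventually (Ioo_mem_nhds hxab.1 hxab.2)).mono fun _ ht => Set.Ioo_subset_Icc_self ht

section Transport

variable {n m : ℕ} (k : ℕ) (r R : Fin n → ℕ) (c C : Fin m → ℕ)

def transportUk : Set (Matrix (Fin n) (Fin m) ℝ) :=
  {A ∈ transportU n m r R c C | ∑ i, ∑ j, A i j = (k : ℝ)}

theorem convex_transportUk : Convex ℝ (transportUk k r R c C) := by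
  rintro A ⟨⟨hA, hAr, hAc⟩, hAk⟩ B ⟨⟨hB, hBr, hBc⟩, hBk⟩ s t hs ht hst
  have hIcc {a b x y : ℝ} (hx : x ∈ Set.Icc a b) (hy : y ∈ Set.Icc a b) :
      s * x + t * y ∈ Set.Icc a b := convex_Icc a b hx hy hs ht hst
  have hrow i : ∑ j, (s • A + t • B) i j = s * ∑ j, A i j + t * ∑ j, B i j := by
    simp [sum_add_distrib, mul_sum]
  have hcol j : ∑ i, (s • A + t • B) i j = s * ∑ i, A i j + t * ∑ i, B i j := by
    simp [sum_add_distrib, mul_sum]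
  refine ⟨⟨fun i j => hIcc (hA i j) (hB i j), fun i => hrow i ▸ hIcc (hAr i) (hBr i),
    fun j => hcol j ▸ hIcc (hAc j) (hBc j)⟩, ?_⟩
  simp only [hrow, sum_add_distrib, ← mul_sum, hAk, hBk]
  rw [← add_mul, hst, one_mul]

theorem isCompact_transportUk : IsCompact (transportUk k r R c C) := by
  have hclosed : IsClosed (transportUk k r R c C) := by
    refine IsClosed.inter ?_ (isClosed_eq (by fun_prop) continuous_const)
    simp only [transportU, Set.ofPred_and, Set.ofPred_forall]
    refine (isClosed_iInter fun i => isClosed_iInter fun j => ?_).inter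
      ((isClosed_iInter fun i => ?_).inter (isClosed_iInter fun j => ?_)) <;>
    exact (isClosed_le (by fun_prop) (by fun_prop)).inter (isClosed_le (by fun_prop) (by fun_prop))
  refine (isCompact_univ_pi fun _ => isCompact_univ_pi fun _ =>
    isCompact_Icc (a := (0 : ℝ)) (b := 1)).of_isClosed_subset hclosed fun A hA i _ j _ => ?_
  exact hA.1.1 i j

theorem eventually_add_smul_mem_transportUk {A D : Matrix (Fin n) (Fin m) ℝ}
    (hA : A ∈ transportUk k r R c C) (hD : ∀ i j, A i j ∈ zmultiples 1 → D i j = 0)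
    (hrow : ∀ i, ∑ j, A i j ∈ zmultiples 1 → ∑ j, D i j = 0)
    (hcol : ∀ j, ∑ i, A i j ∈ zmultiples 1 → ∑ i, D i j = 0)
    (htot : ∑ i, ∑ j, D i j = 0) :
    ∀ᶠ t in 𝓝 (0 : ℝ), A + t • D ∈ transportUk k r R c C := by
  obtain ⟨⟨hAe, hAr, hAc⟩, hAk⟩ := hA
  have hnat (p : ℕ) : (p : ℝ) ∈ zmultiples (1 : ℝ) := by
    exact_mod_cast AddSubgroup.intCast_mem_zmultiples_one (p : ℤ)
  have hrows (t : ℝ) i : ∑ j, (A + t • D) i j = ∑ j, A i j + t * ∑ j, D i j := by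
    simp [sum_add_distrib, mul_sum]
  have hcols (t : ℝ) j : ∑ i, (A + t • D) i j = ∑ i, A i j + t * ∑ i, D i j := by
    simp [sum_add_distrib, mul_sum]
  filter_upwards [eventually_all.2 fun i => eventually_all.2 fun j =>
      eventually_add_mul_mem_Icc (zero_mem _) (AddSubgroup.mem_zmultiples 1) (hAe i j) (hD i j),
    eventually_all.2 fun i => eventually_add_mul_mem_Icc (hnat _) (hnat _) (hAr i) (hrow i),
    eventually_all.2 fun j => eventually_add_mul_mem_Icc (hnat _) (hnat _) (hAc j) (hcol j)]
    with t he hr hc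
  refine ⟨⟨fun i j => he i j, fun i => hrows t i ▸ hr i, fun j => hcols t j ▸ hc j⟩, ?_⟩
  simp only [hrows, sum_add_distrib, ← mul_sum, htot, hAk, mul_zero, add_zero]

section FractionalGraph

variable {A : Matrix (Fin n) (Fin m) ℝ}

noncomputable def fractionalEntries (A : Matrix (Fin n) (Fin m) ℝ) : Finset (Fin n × Fin m) :=
  {e | A e.1 e.2 ∉ zmultiples 1}

theorem mem_fractionalEntries {e : Fin n × Fin m} :
    e ∈ fractionalEntries A ↔ A e.1 e.2 ∉ zmultiples 1 := by
  simp [fractionalEntries]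

/-- Rows with integral sum are vertices of their own; all other rows are merged into the vertex
`none`, whose constraint is the total sum. -/
noncomputable def rowVertex (A : Matrix (Fin n) (Fin m) ℝ) (e : Fin n × Fin m) : Option (Fin n) :=
  guardMem (zmultiples 1) (fun i => ∑ j, A i j) e.1

theorem sum_fractionalEntries_rowVertex_mem (hA : A ∈ transportUk k r R c C)
    (v : Option (Fin n)) :
    ∑ e ∈ fractionalEntries A with rowVertex A e = v, A e.1 e.2 ∈ zmultiples 1 := by
  have htot : ∑ i, ∑ j, A i j ∈ zmultiples (1 : ℝ) := by
    rw [hA.2]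
    exact_mod_cast AddSubgroup.intCast_mem_zmultiples_one (k : ℤ)
  rw [fractionalEntries, filter_comm]
  refine AddSubgroup.sum_filter_notMem_mem ?_
  unfold rowVertex
  rw [sum_filter_fst (guardMem (zmultiples 1) (fun i => ∑ j, A i j) · = v)]
  exact sum_filter_guardMem_eq_mem htot v

theorem sum_fractionalEntries_snd_mem {j : Fin m} (hj : ∑ i, A i j ∈ zmultiples 1) :
    ∑ e ∈ fractionalEntries A with e.2 = j, A e.1 e.2 ∈ zmultiples 1 := by
  rw [fractionalEntries, filter_comm]
  refine AddSubgroup.sum_filter_notMem_mem ?_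
  rwa [sum_filter_snd_eq]

theorem IsBalanced.eq_zero_of_mem_extremePoints
    (hA : A ∈ (transportUk k r R c C).extremePoints ℝ) {D : Fin n × Fin m → ℝ}
    (hD : IsBalanced (rowVertex A) Prod.snd (fractionalEntries A) Set.univ
      {j | ∑ i, A i j ∈ zmultiples 1} D) : D = 0 := by
  obtain ⟨hDF, hDL, hDR⟩ := hD
  have hsupp := sum_filter_eq_of_forall_notMem_eq_zero hDF
  have hrow i (hi : ∑ j, A i j ∈ zmultiples 1) : ∑ j, D (i, j) = 0 := by
    rw [← sum_filter_fst_eq, ← hDL (some i) (Set.mem_univ _), hsupp]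
    refine sum_congr (filter_congr fun e _ => ?_) fun _ _ => rfl
    simp only [rowVertex, guardMem_eq_some_iff]
    exact ⟨fun h => ⟨h, h ▸ hi⟩, And.left⟩
  have hcol j (hj : ∑ i, A i j ∈ zmultiples 1) : ∑ i, D (i, j) = 0 := by
    rw [← sum_filter_snd_eq, ← hsupp]
    exact hDR j hj
  -- the vertex sums at all rows, `none` included, add up to the total sum
  have htot : ∑ i, ∑ j, D (i, j) = 0 := by
    rw [← Fintype.sum_prod_type, ← sum_subset (subset_univ _) fun e _ => hDF e,
      ← sum_fiberwise _ (rowVertex A) D]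
    exact sum_eq_zero fun v _ => hDL v (Set.mem_univ v)
  have := eq_zero_of_mem_extremePoints_of_eventually_add_smul_mem hA
    (eventually_add_smul_mem_transportUk k r R c C hA.1 (D := Function.curry D)
      (fun i j h => hDF (i, j) fun he => mem_fractionalEntries.1 he h) hrow hcol htot)
  exact funext fun e => congrFun (congrFun this e.1) e.2

end FractionalGraph

theorem mem_zmultiples_one_of_mem_extremePoints {A : Matrix (Fin n) (Fin m) ℝ}
    (hA : A ∈ (transportUk k r R c C).extremePoints ℝ) (i : Fin n) (j : Fin m) :
    A i j ∈ zmultiples 1 := by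
  rcases exists_isBalanced_ne_zero_or_forall_mem (K := ℝ) (zmultiples (1 : ℝ)) (rowVertex A)
      Prod.snd (fun e => A e.1 e.2) (fractionalEntries A) Set.univ {j | ∑ i, A i j ∈ zmultiples 1}
      (fun v _ => sum_fractionalEntries_rowVertex_mem k r R c C hA.1 v)
      (fun _ hj => sum_fractionalEntries_snd_mem hj) with ⟨D, hD0, hD⟩ | hint
  · exact (hD0 (hD.eq_zero_of_mem_extremePoints k r R c C hA)).elim
  · by_contra h
    exact h (hint (i, j) (mem_fractionalEntries.2 h))

theorem extremePoints_transportUk_subset :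
    (transportUk k r R c C).extremePoints ℝ ⊆ {A ∈ transportU n m r R c C |
      (∑ i, ∑ j, A i j = (k : ℝ)) ∧ ∀ i j, A i j = 0 ∨ A i j = 1} := by
  intro A hA
  refine ⟨hA.1.1, hA.1.2, fun i j => ?_⟩
  obtain ⟨z, hz⟩ := AddSubgroup.mem_zmultiples_iff.1
    (mem_zmultiples_one_of_mem_extremePoints k r R c C hA i j)
  have h01 := hA.1.1.1 i j
  rw [← hz, zsmul_one] at h01 ⊢
  have : 0 ≤ z := by exact_mod_cast h01.1
  have : z ≤ 1 := by exact_mod_cast h01.2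
  interval_cases z <;> simp

end Transport

theorem transportUk_eq_convexHull_general (n m k : ℕ) (r R : Fin n → ℕ) (c C : Fin m → ℕ) :
    {A ∈ transportU n m r R c C | ∑ i, ∑ j, A i j = (k : ℝ)} =
      convexHull ℝ {A ∈ transportU n m r R c C |
        (∑ i, ∑ j, A i j = (k : ℝ)) ∧ ∀ i j, A i j = 0 ∨ A i j = 1} := by
  have : LocallyConvexSpace ℝ (Matrix (Fin n) (Fin m) ℝ) :=
    inferInstanceAs (LocallyConvexSpace ℝ (Fin n → Fin m → ℝ))
  have hfinite : {A : Matrix (Fin n) (Fin m) ℝ | A ∈ transportU n m r R c C ∧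
      (∑ i, ∑ j, A i j = (k : ℝ)) ∧ ∀ i j, A i j = 0 ∨ A i j = 1}.Finite :=
    (Set.Finite.pi fun _ => Set.Finite.pi fun _ => Set.toFinite {(0 : ℝ), 1}).subset
      fun A hA i _ j _ => hA.2.2 i j
  exact eq_convexHull_of_extremePoints_subset (isCompact_transportUk k r R c C)
    (convex_transportUk k r R c C) (extremePoints_transportUk_subset k r R c C)
    (fun A hA => ⟨hA.1, hA.2.1⟩) hfinite

theorem transportUk_eq_convexHull (n m k : ℕ) (hn : 0 < n) (hm : 0 < m) (hk : 0 < k)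
    (r R : Fin n → ℕ) (c C : Fin m → ℕ)
    (hrR : ∀ i, r i ≤ R i) (hcC : ∀ j, c j ≤ C j) :
    {A ∈ transportU n m r R c C | ∑ i, ∑ j, A i j = (k : ℝ)} =
      convexHull ℝ {A ∈ transportU n m r R c C |
        (∑ i, ∑ j, A i j = (k : ℝ)) ∧ ∀ i j, A i j = 0 ∨ A i j = 1} :=
  transportUk_eq_convexHull_general n m k r R c C
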